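/- arXiv:2303.08221 — 7 statements merged into one kernel-verified Lean document; each statement's English description precedes it below -/
import Mathlib

section
/- Let g, h ∈ G₁ and g̃ ∈ G₂, and let x, y₁, y₂, m₁, m₂, o₁, o₂ be integers. Set the blinded commitments com_j = g^{o_j}·h^{m_j} for j = 1,2, the blinded signature share c = h^{x} · com₁^{y₁} · com₂^{y₂}, the unblinding elements β_j = g^{y_j}, and the unblinded share s = c · β₁^{-o₁} · β₂^{-o₂}. Then s = h^{x + y₁m₁ + y₂m₂}, and consequently the withdrawal verification equation e(h, g̃^{x} · (g̃^{y₁})^{m₁} · (g̃^{y₂})^{m₂}) = e(s, g̃) holds. -/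
private lemma aux_cancel {G : Type*} [CommGroup G] (a b H : G) :
    a * (b * (H * (a⁻¹ * b⁻¹))) = H := by
  rw [mul_comm H, ← mul_assoc, ← mul_assoc, ← mul_assoc, mul_right_comm a b,
    mul_inv_cancel, one_mul, mul_inv_cancel, one_mul]

private lemma unblind_aux {G : Type*} [CommGroup G] (g h : G) (x y₁ y₂ m₁ m₂ o₁ o₂ : ℤ) :
    h ^ x * (g ^ o₁ * h ^ m₁) ^ y₁ * (g ^ o₂ * h ^ m₂) ^ y₂ *
      (g ^ y₁) ^ (-o₁) * (g ^ y₂) ^ (-o₂) = h ^ (x + y₁ * m₁ + y₂ * m₂) := by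
  simp only [mul_zpow, ← zpow_mul]
  simp only [mul_comm, mul_left_comm, mul_assoc, ← zpow_add]
  ring_nf
  simp only [sub_eq_add_neg, zpow_add, zpow_neg]
  simp only [mul_assoc]
  rw [show h ^ (y₁ * m₁) * (h ^ (y₂ * m₂) * (h ^ x * ((g ^ (y₁ * o₁))⁻¹ * (g ^ (y₂ * o₂))⁻¹)))
      = (h ^ (y₁ * m₁) * (h ^ (y₂ * m₂) * h ^ x)) * ((g ^ (y₁ * o₁))⁻¹ * (g ^ (y₂ * o₂))⁻¹)
    from by simp [mul_assoc], aux_cancel]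

/-- Correctness of the blind-issuance/unblinding step (cecWithdraw / cecWithdrawVf). -/
theorem withdraw_unblind_correctness
    {G₁ G₂ GT : Type*} [CommGroup G₁] [CommGroup G₂] [CommGroup GT]
    (e : G₁ → G₂ → GT)
    (e_mul_left : ∀ (a a' : G₁) (b : G₂), e (a * a') b = e a b * e a' b)
    (e_mul_right : ∀ (a : G₁) (b b' : G₂), e a (b * b') = e a b * e a b')
    (g h : G₁) (gt : G₂)
    (x y₁ y₂ m₁ m₂ o₁ o₂ : ℤ)
    (com₁ com₂ c β₁ β₂ s : G₁)
    (hcom₁ : com₁ = g ^ o₁ * h ^ m₁)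
    (hcom₂ : com₂ = g ^ o₂ * h ^ m₂)
    (hc : c = h ^ x * com₁ ^ y₁ * com₂ ^ y₂)
    (hβ₁ : β₁ = g ^ y₁)
    (hβ₂ : β₂ = g ^ y₂)
    (hs : s = c * β₁ ^ (-o₁) * β₂ ^ (-o₂)) :
    s = h ^ (x + y₁ * m₁ + y₂ * m₂) ∧
      e h (gt ^ x * (gt ^ y₁) ^ m₁ * (gt ^ y₂) ^ m₂) = e s gt := by
  have homL : ∀ (a : G₁) (b : G₂) (n : ℤ), e (a ^ n) b = e a b ^ n := by
    intro a b n
    exact MonoidHom.map_zpow ⟨⟨fun z => e z b, by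
      have := e_mul_left 1 1 b
      simpa using this.symm⟩, fun u v => e_mul_left u v b⟩ a n
  have homR : ∀ (a : G₁) (b : G₂) (n : ℤ), e a (b ^ n) = e a b ^ n := by
    intro a b n
    exact MonoidHom.map_zpow ⟨⟨fun z => e a z, by
      have := e_mul_right a 1 1
      simpa using this.symm⟩, fun u v => e_mul_right a u v⟩ b n
  subst hcom₁ hcom₂ hc hβ₁ hβ₂ hs
  have h1 := unblind_aux g h x y₁ y₂ m₁ m₂ o₁ o₂
  refine ⟨h1, ?_⟩
  rw [h1, homL, e_mul_right, e_mul_right, homR, homR, homR, ← zpow_mul, ← zpow_mul,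
    zpow_add, zpow_add, homR]
end

section
/- Let p be a prime, G a commutative group in which every element x satisfies x^p = 1 (so that exponentiation g^a by a ∈ ℤ/pℤ is well defined), and h ∈ G. Let t ≥ 1, let v, w₁, w₂ be polynomials over ℤ/pℤ of degree < t, let m₁, m₂ ∈ ℤ/pℤ, and let S be a finite subset of (ℤ/pℤ) \ {0} with |S| = t. For each i ∈ S define the Lagrange coefficient l_i = ∏_{j ∈ S, j ≠ i} (0 − j)·(i − j)⁻¹ and the partial signature s_i = h^{v(i) + w₁(i)·m₁ + w₂(i)·m₂}. Then ∏_{i ∈ S} s_i^{l_i} = h^{v(0) + w₁(0)·m₁ + w₂(0)·m₂}. -/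
/-- Exponentiation of a group element by an element of `ZMod p`
(well defined as a homomorphism in the exponent when the group has exponent `p`). -/
def zpowZMod {G : Type*} [Monoid G] {p : ℕ} (g : G) (a : ZMod p) : G := g ^ a.val

/-! Both shares and master signature are powers of `h`, and `zpowZMod h` turns sums and products
of exponents into products and iterated powers because `h ^ p = 1`. The exponent
`f = v + m₁ w₁ + m₂ w₂` has degree `< t = #S`, so Lagrange interpolation on the nodes `S`
evaluated at `0` gives `f 0 = ∑ i ∈ S, f i * l i`, which is the claim in the exponent. -/

open Polynomial Finset

section zpowZMod

variable {M : Type*} {p : ℕ} {g : M}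

theorem zpowZMod_natCast [Monoid M] (hg : g ^ p = 1) (n : ℕ) :
    zpowZMod g (n : ZMod p) = g ^ n := by
  rw [zpowZMod, ZMod.val_natCast, ← pow_eq_pow_mod _ hg]

variable [NeZero p]

theorem zpowZMod_mul [Monoid M] (hg : g ^ p = 1) (a b : ZMod p) :
    zpowZMod g (a * b) = zpowZMod (zpowZMod g a) b := by
  conv_lhs => rw [← ZMod.natCast_zmod_val a, ← ZMod.natCast_zmod_val b, ← Nat.cast_mul]
  rw [zpowZMod_natCast hg, pow_mul, zpowZMod, zpowZMod]

theorem zpowZMod_sum [CommMonoid M] (hg : g ^ p = 1) {ι : Type*} (s : Finset ι)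
    (c : ι → ZMod p) : zpowZMod g (∑ i ∈ s, c i) = ∏ i ∈ s, zpowZMod g (c i) := by
  have hsum : ∑ i ∈ s, c i = ((∑ i ∈ s, (c i).val : ℕ) : ZMod p) := by
    push_cast; simp only [ZMod.natCast_zmod_val]
  rw [hsum, zpowZMod_natCast hg, ← prod_pow_eq_pow_sum]
  rfl

end zpowZMod

theorem Lagrange.eval_eq_sum_eval_mul_prod {F : Type*} [Field F] [DecidableEq F] {s : Finset F}
    {f : F[X]} (hf : f.degree < #s) (x : F) :
    f.eval x = ∑ i ∈ s, f.eval i * ∏ j ∈ s.erase i, (x - j) * (i - j)⁻¹ := by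
  conv_lhs => rw [Lagrange.eq_interpolate (Set.injOn_id _) hf]
  simp [Lagrange.interpolate_apply, eval_finsetSum, Lagrange.basis, eval_prod,
    Lagrange.basisDivisor, mul_comm]

theorem create_wallet_aggregation_correctness_general
    {p : ℕ} (hp : p.Prime) {G : Type*} [CommGroup G]
    (hG : ∀ x : G, x ^ p = 1)
    (h : G) (t : ℕ)
    (v w₁ w₂ : Polynomial (ZMod p))
    (hv : v.degree < (t : WithBot ℕ))
    (hw₁ : w₁.degree < (t : WithBot ℕ))
    (hw₂ : w₂.degree < (t : WithBot ℕ))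
    (m₁ m₂ : ZMod p)
    (S : Finset (ZMod p)) (hScard : S.card = t)
    (l : ZMod p → ZMod p)
    (hl : ∀ i ∈ S, l i = ∏ j ∈ S.erase i, (0 - j) * (i - j)⁻¹)
    (s : ZMod p → G)
    (hs : ∀ i ∈ S, s i = zpowZMod h (v.eval i + w₁.eval i * m₁ + w₂.eval i * m₂)) :
    ∏ i ∈ S, zpowZMod (s i) (l i)
      = zpowZMod h (v.eval 0 + w₁.eval 0 * m₁ + w₂.eval 0 * m₂) := by
  have : Fact p.Prime := ⟨hp⟩
  set f := v + m₁ • w₁ + m₂ • w₂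
  have eval_f (x : ZMod p) : f.eval x = v.eval x + w₁.eval x * m₁ + w₂.eval x * m₂ := by
    simp only [f, eval_add, eval_smul, smul_eq_mul, mul_comm]
  have hf : f.degree < #S := by
    rw [hScard, ← mem_degreeLT]
    rw [← mem_degreeLT] at hv hw₁ hw₂
    exact add_mem (add_mem hv (Submodule.smul_mem _ _ hw₁)) (Submodule.smul_mem _ _ hw₂)
  calc ∏ i ∈ S, zpowZMod (s i) (l i)
      = ∏ i ∈ S, zpowZMod h (f.eval i * l i) := prod_congr rfl fun i hi => by
        rw [hs i hi, zpowZMod_mul (hG h), eval_f]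
    _ = zpowZMod h (f.eval 0) := by
        rw [← zpowZMod_sum (hG h), Lagrange.eval_eq_sum_eval_mul_prod hf 0]
        exact congrArg _ (sum_congr rfl fun i hi => by rw [hl i hi])
    _ = _ := by rw [eval_f]

/-- Correctness of threshold aggregation (cecCreateWallet): the Lagrange-weighted product of
partial Pointcheval–Sanders shares equals the signature under the master secret key. -/
theorem create_wallet_aggregation_correctness
    {p : ℕ} (hp : p.Prime) {G : Type*} [CommGroup G]
    (hG : ∀ x : G, x ^ p = 1)
    (h : G) (t : ℕ) (ht : 1 ≤ t)
    (v w₁ w₂ : Polynomial (ZMod p))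
    (hv : v.degree < (t : WithBot ℕ))
    (hw₁ : w₁.degree < (t : WithBot ℕ))
    (hw₂ : w₂.degree < (t : WithBot ℕ))
    (m₁ m₂ : ZMod p)
    (S : Finset (ZMod p)) (hS0 : (0 : ZMod p) ∉ S) (hScard : S.card = t)
    (l : ZMod p → ZMod p)
    (hl : ∀ i ∈ S, l i = ∏ j ∈ S.erase i, (0 - j) * (i - j)⁻¹)
    (s : ZMod p → G)
    (hs : ∀ i ∈ S, s i = zpowZMod h (v.eval i + w₁.eval i * m₁ + w₂.eval i * m₂)) :
    ∏ i ∈ S, zpowZMod (s i) (l i)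
      = zpowZMod h (v.eval 0 + w₁.eval 0 * m₁ + w₂.eval 0 * m₂) :=
  create_wallet_aggregation_correctness_general hp hG h t v w₁ w₂ hv hw₁ hw₂ m₁ m₂ S hScard l hl s
    hs
end

section
/- Let g ∈ G₁ and g̃ ∈ G₂, and let x, y₁, y₂, m₁, m₂, u, r, r' be integers. Set h = g^u, s = h^{x + y₁m₁ + y₂m₂} (a valid Pointcheval–Sanders signature on (m₁, m₂)), and compute the randomized signature h' = h^{r'}, s' = s^{r'}·(h')^{r}, together with κ = g̃^{x}·(g̃^{y₁})^{m₁}·(g̃^{y₂})^{m₂}·g̃^{r}. Then the spend verification equation e(h', κ) = e(s', g̃) holds. -/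
/-- Correctness of the randomized proof-of-signature-possession used in the spend phase. -/
theorem spend_randomized_signature_correctness
    {G₁ G₂ GT : Type*} [CommGroup G₁] [CommGroup G₂] [CommGroup GT]
    (e : G₁ → G₂ → GT)
    (e_mul_left : ∀ (a a' : G₁) (b : G₂), e (a * a') b = e a b * e a' b)
    (e_mul_right : ∀ (a : G₁) (b b' : G₂), e a (b * b') = e a b * e a b')
    (g : G₁) (gt : G₂)
    (x y₁ y₂ m₁ m₂ u r r' : ℤ)
    (h s h' s' : G₁) (κ : G₂)
    (hh : h = g ^ u)
    (hs : s = h ^ (x + y₁ * m₁ + y₂ * m₂))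
    (hh' : h' = h ^ r')
    (hs' : s' = s ^ r' * h' ^ r)
    (hκ : κ = gt ^ x * (gt ^ y₁) ^ m₁ * (gt ^ y₂) ^ m₂ * gt ^ r) :
    e h' κ = e s' gt := by
  have e_zpow_left : ∀ (a : G₁) (b : G₂) (n : ℤ), e (a ^ n) b = e a b ^ n := by
    intro a b n
    have hmono : (MonoidHom.mk' (fun a : G₁ => e a b) (fun a a' => e_mul_left a a' b)) a ^ n
        = e (a ^ n) b := by
      rw [← map_zpow]; rfl
    simpa using hmono.symm
  have e_zpow_right : ∀ (a : G₁) (b : G₂) (n : ℤ), e a (b ^ n) = e a b ^ n := by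
    intro a b n
    have hmono : (MonoidHom.mk' (fun b : G₂ => e a b) (fun b b' => e_mul_right a b b')) b ^ n
        = e a (b ^ n) := by
      rw [← map_zpow]; rfl
    simpa using hmono.symm
  subst hκ hs' hh' hs hh
  simp only [e_mul_left, e_mul_right, e_zpow_left, e_zpow_right, ← zpow_mul, ← zpow_add]
  ring_nf
end

section
/- Let p be a prime and suppose every element of G₁ and of G₂ raised to the power p equals 1 (so exponentiation by elements of ℤ/pℤ is well defined). Let g ∈ G₁, g̃ ∈ G₂, let u₁,…,u_b, y, w₁,…,w_a, z ∈ ℤ/pℤ, and set U_i = g^{u_i}, Y = g̃^{y}, W_i = g̃^{w_i}, Z = g̃^{z}. Let m₁,…,m_a ∈ G₁ and m'₁,…,m'_b ∈ G₂ be messages, let r ∈ ℤ/pℤ with r ≠ 0, and set R = g^{r}, S = g^{z − r·y}·∏_{i=1}^{a} m_i^{-w_i}, T = (g̃·∏_{i=1}^{b} (m'_i)^{-u_i})^{r⁻¹}. Then both structure-preserving-signature verification equations hold: e(R, Y)·e(S, g̃)·∏_{i=1}^{a} e(m_i, W_i) = e(g, Z) and e(R, T)·∏_{i=1}^{b} e(U_i,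 m'_i) = e(g, g̃). -/
section aux

variable {G : Type*} [Monoid G] {p : ℕ}

lemma pow_mod_p' {t : G} (ht : t ^ p = 1) (n : ℕ) : t ^ (n % p) = t ^ n := by
  conv_rhs => rw [← Nat.div_add_mod n p]
  rw [pow_add, pow_mul, ht, one_pow, one_mul]

lemma zpowZMod_add [NeZero p] {t : G} (ht : t ^ p = 1) (a b : ZMod p) :
    zpowZMod t (a + b) = zpowZMod t a * zpowZMod t b := by
  unfold zpowZMod
  rw [ZMod.val_add, pow_mod_p' ht, pow_add]

lemma zpowZMod_mul_s11 [NeZero p] {t : G} (ht : t ^ p = 1) (a b : ZMod p) :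
    zpowZMod t (a * b) = zpowZMod (zpowZMod t a) b := by
  unfold zpowZMod
  rw [ZMod.val_mul, pow_mod_p' ht, pow_mul]

lemma zpowZMod_zero (t : G) : zpowZMod t (0 : ZMod p) = 1 := by
  simp [zpowZMod]

lemma zpowZMod_one [Fact (1 < p)] (t : G) : zpowZMod t (1 : ZMod p) = t := by
  simp [zpowZMod, ZMod.val_one]

end aux

/-- Correctness of the structure-preserving signature scheme of Abe et al. -/
theorem sps_correctness
    {p : ℕ} (hp : p.Prime)
    {G₁ G₂ GT : Type*} [CommGroup G₁] [CommGroup G₂] [CommGroup GT]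
    (hG₁ : ∀ x : G₁, x ^ p = 1) (hG₂ : ∀ x : G₂, x ^ p = 1)
    (e : G₁ → G₂ → GT)
    (e_mul_left : ∀ (x x' : G₁) (y : G₂), e (x * x') y = e x y * e x' y)
    (e_mul_right : ∀ (x : G₁) (y y' : G₂), e x (y * y') = e x y * e x y')
    (g : G₁) (gt : G₂)
    (a b : ℕ)
    (u : Fin b → ZMod p) (y : ZMod p) (w : Fin a → ZMod p) (z : ZMod p)
    (U : Fin b → G₁) (Y : G₂) (W : Fin a → G₂) (Z : G₂)
    (hU : ∀ i, U i = zpowZMod g (u i))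
    (hY : Y = zpowZMod gt y)
    (hW : ∀ i, W i = zpowZMod gt (w i))
    (hZ : Z = zpowZMod gt z)
    (m : Fin a → G₁) (m' : Fin b → G₂)
    (r : ZMod p) (hr : r ≠ 0)
    (R S : G₁) (T : G₂)
    (hR : R = zpowZMod g r)
    (hS : S = zpowZMod g (z - r * y) * ∏ i, zpowZMod (m i) (-(w i)))
    (hT : T = zpowZMod (gt * ∏ i, zpowZMod (m' i) (-(u i))) r⁻¹) :
    e R Y * e S gt * ∏ i, e (m i) (W i) = e g Z ∧
    e R T * ∏ i, e (U i) (m' i) = e g gt := by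
  haveI : Fact p.Prime := ⟨hp⟩
  haveI : Fact (1 < p) := ⟨hp.one_lt⟩
  -- e is a homomorphism in each argument
  have e_one_left : ∀ y', e 1 y' = 1 := by
    intro y'
    have h := e_mul_left 1 1 y'
    rw [mul_one] at h
    exact left_eq_mul.mp h
  have e_one_right : ∀ x, e x 1 = 1 := by
    intro x
    have h := e_mul_right x 1 1
    rw [mul_one] at h
    exact left_eq_mul.mp h
  have epow_left : ∀ (x : G₁) (y' : G₂) (n : ℕ), e (x ^ n) y' = e x y' ^ n := by
    intro x y' n
    induction n with
    | zero => simpa using e_one_left y'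
    | succ k ih => rw [pow_succ, pow_succ, e_mul_left, ih]
  have epow_right : ∀ (x : G₁) (y' : G₂) (n : ℕ), e x (y' ^ n) = e x y' ^ n := by
    intro x y' n
    induction n with
    | zero => simpa using e_one_right x
    | succ k ih => rw [pow_succ, pow_succ, e_mul_right, ih]
  have ezpow_left : ∀ (x : G₁) (y' : G₂) (c : ZMod p),
      e (zpowZMod x c) y' = zpowZMod (e x y') c := fun x y' c => epow_left x y' c.val
  have ezpow_right : ∀ (x : G₁) (y' : G₂) (c : ZMod p),
      e x (zpowZMod y' c) = zpowZMod (e x y') c := fun x y' c => epow_right x y' c.val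
  have etor : ∀ (x : G₁) (y' : G₂), (e x y') ^ p = 1 := fun x y' => by
    rw [← epow_left, hG₁ x, e_one_left]
  have eprod_left : ∀ (y' : G₂) {n : ℕ} (f : Fin n → G₁),
      e (∏ i, f i) y' = ∏ i, e (f i) y' := fun y' n f =>
    map_prod (MonoidHom.mk' (fun x => e x y') (fun x x' => e_mul_left x x' y')) f Finset.univ
  have eprod_right : ∀ (x : G₁) {n : ℕ} (f : Fin n → G₂),
      e x (∏ i, f i) = ∏ i, e x (f i) := fun x n f =>
    map_prod (MonoidHom.mk' (fun y' => e x y') (fun y₁ y₂ => e_mul_right x y₁ y₂)) f Finset.univ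
  constructor
  · -- first verification equation
    have h1 : e R Y = zpowZMod (e g gt) (r * y) := by
      rw [hR, hY, ezpow_left, ezpow_right, ← zpowZMod_mul_s11 (etor g gt), mul_comm y r]
    have h2 : e S gt = zpowZMod (e g gt) (z - r * y) *
        ∏ i, zpowZMod (e (m i) gt) (-(w i)) := by
      rw [hS, e_mul_left, ezpow_left, eprod_left]
      congr 1
      exact Finset.prod_congr rfl fun i _ => ezpow_left _ _ _
    have h3 : (∏ i, e (m i) (W i)) = ∏ i, zpowZMod (e (m i) gt) (w i) :=
      Finset.prod_congr rfl fun i _ => by rw [hW i, ezpow_right]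
    have hPQ : (∏ i, zpowZMod (e (m i) gt) (-(w i))) * (∏ i, zpowZMod (e (m i) gt) (w i)) = 1 := by
      rw [← Finset.prod_mul_distrib, Finset.prod_eq_one]
      intro i _
      rw [← zpowZMod_add (etor (m i) gt), neg_add_cancel, zpowZMod_zero]
    have hz : r * y + (z - r * y) = z := by ring
    rw [h1, h2, h3, hZ, ezpow_right, mul_assoc, mul_assoc, hPQ, mul_one,
      ← zpowZMod_add (etor g gt), hz]
  · -- second verification equation
    have hX : e g (gt * ∏ i, zpowZMod (m' i) (-(u i))) =
        e g gt * ∏ i, zpowZMod (e g (m' i)) (-(u i)) := by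
      rw [e_mul_right, eprod_right]
      congr 1
      exact Finset.prod_congr rfl fun i _ => ezpow_right _ _ _
    have h1 : e R T = e g gt * ∏ i, zpowZMod (e g (m' i)) (-(u i)) := by
      rw [hR, hT, ezpow_left, ezpow_right, ← zpowZMod_mul_s11 (etor g _),
        mul_comm r⁻¹ r, mul_inv_cancel₀ hr, zpowZMod_one, hX]
    have h2 : (∏ i, e (U i) (m' i)) = ∏ i, zpowZMod (e g (m' i)) (u i) :=
      Finset.prod_congr rfl fun i _ => by rw [hU i, ezpow_left]
    rw [h1, h2, mul_assoc, ← Finset.prod_mul_distrib]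
    have hprod : (∏ i, zpowZMod (e g (m' i)) (-(u i)) * zpowZMod (e g (m' i)) (u i)) = 1 := by
      rw [Finset.prod_eq_one]
      intro i _
      rw [← zpowZMod_add (etor g (m' i)), neg_add_cancel, zpowZMod_zero]
    rw [hprod, mul_one]
end

section
/- Let ς, g ∈ G₁ and g̃ ∈ G₂, let y, a, sn, r₁ be integers, and let l, k be natural numbers. Set ς_l = ς^{y^{l}}, η_V = g^{a}, δ̃_k = g̃^{y^{k}}, η̃_{V,k} = g̃^{-a·y^{k}}, and let the ElGamal-style ciphertext be φ[1] = g^{r₁}, φ[2] = ς_l^{sn} · η_V^{r₁}. Then e(φ[2], δ̃_k) · e(φ[1], η̃_{V,k}) = e(ς, g̃)^{sn·y^{l+k}}. -/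
/-- In the divisible e-cash scheme an authority recomputes the serial number
SN_{l+k} = e(ς, g̃)^{sn·y^{l+k}} from the spent ciphertext φ, independently of the
encryption randomness. -/
theorem divisible_serial_number_recomputation
    {G₁ G₂ GT : Type*} [CommGroup G₁] [CommGroup G₂] [CommGroup GT]
    (e : G₁ → G₂ → GT)
    (e_mul_left : ∀ (x x' : G₁) (y : G₂), e (x * x') y = e x y * e x' y)
    (e_mul_right : ∀ (x : G₁) (y y' : G₂), e x (y * y') = e x y * e x y')
    (ς g : G₁) (gt : G₂)
    (y a sn r₁ : ℤ) (l k : ℕ)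
    (ςl ηV : G₁) (δk ηVk : G₂) (φ1 φ2 : G₁)
    (hςl : ςl = ς ^ (y ^ l))
    (hηV : ηV = g ^ a)
    (hδk : δk = gt ^ (y ^ k))
    (hηVk : ηVk = gt ^ (-(a * y ^ k)))
    (hφ1 : φ1 = g ^ r₁)
    (hφ2 : φ2 = ςl ^ sn * ηV ^ r₁) :
    e φ2 δk * e φ1 ηVk = (e ς gt) ^ (sn * y ^ (l + k)) := by
  have hL : ∀ (x : G₁) (n : ℤ) (w : G₂), e (x ^ n) w = e x w ^ n := by
    intro x n w
    exact (MonoidHom.mk' (fun z => e z w) (fun z z' => e_mul_left z z' w)).map_zpow x n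
  have hR : ∀ (x : G₁) (n : ℤ) (w : G₂), e x (w ^ n) = e x w ^ n := by
    intro x n w
    exact (MonoidHom.mk' (fun z => e x z) (fun z z' => e_mul_right x z z')).map_zpow w n
  subst hςl hηV hδk hηVk hφ1 hφ2
  rw [e_mul_left]
  simp only [hL, hR, ← zpow_mul]
  rw [mul_assoc, ← zpow_add]
  rw [show y ^ k * (a * r₁) + -(a * y ^ k) * r₁ = 0 by ring, zpow_zero, mul_one]
  rw [show y ^ k * (y ^ l * sn) = sn * y ^ (l + k) by rw [pow_add]; ring]
end

section
/- Let g, θ ∈ G₁ and g̃ ∈ G₂, let y, a, sn, sk, R, r₂ be integers, and let l, k be natural numbers. Set θ_l = θ^{y^{l}}, η_V = g^{a}, δ̃_k = g̃^{y^{k}}, η̃_{V,k} = g̃^{-a·y^{k}}, and let the double-spending tag ciphertext be φ'[1] = g^{r₂}, φ'[2] = g^{R·sk} · θ_l^{sn} · η_V^{r₂}. Then e(φ'[2], δ̃_k) · e(φ'[1], η̃_{V,k}) = e(g, g̃)^{R·sk·y^{k}} · e(θ, g̃)^{sn·y^{l+k}}. -/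
/-- The value of the security tag recomputed by an authority during deposit in the
divisible e-cash scheme, independently of the encryption randomness. -/
theorem divisible_security_tag_recomputation
    {G₁ G₂ GT : Type*} [CommGroup G₁] [CommGroup G₂] [CommGroup GT]
    (e : G₁ → G₂ → GT)
    (e_mul_left : ∀ (x x' : G₁) (y : G₂), e (x * x') y = e x y * e x' y)
    (e_mul_right : ∀ (x : G₁) (y y' : G₂), e x (y * y') = e x y * e x y')
    (g θ : G₁) (gt : G₂)
    (y a sn sk R r₂ : ℤ) (l k : ℕ)
    (θl ηV : G₁) (δk ηVk : G₂) (φ'1 φ'2 : G₁)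
    (hθl : θl = θ ^ (y ^ l))
    (hηV : ηV = g ^ a)
    (hδk : δk = gt ^ (y ^ k))
    (hηVk : ηVk = gt ^ (-(a * y ^ k)))
    (hφ'1 : φ'1 = g ^ r₂)
    (hφ'2 : φ'2 = g ^ (R * sk) * θl ^ sn * ηV ^ r₂) :
    e φ'2 δk * e φ'1 ηVk
      = (e g gt) ^ (R * sk * y ^ k) * (e θ gt) ^ (sn * y ^ (l + k)) := by
  have hl : ∀ (x : G₁) (b : G₂) (n : ℤ), e (x ^ n) b = (e x b) ^ n := fun x b n =>
    map_zpow (MonoidHom.mk' (fun x => e x b) (fun u v => e_mul_left u v b)) x n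
  have hr : ∀ (x : G₁) (b : G₂) (n : ℤ), e x (b ^ n) = (e x b) ^ n := fun x b n =>
    map_zpow (MonoidHom.mk' (fun b => e x b) (fun u v => e_mul_right x u v)) b n
  subst hθl hηV hδk hηVk hφ'1 hφ'2
  simp only [e_mul_left, hl, hr, ← zpow_mul, ← zpow_add]
  rw [mul_right_comm (e g gt ^ (y ^ k * (R * sk))) (e θ gt ^ (y ^ k * (y ^ l * sn))),
    mul_right_comm _ (e θ gt ^ (y ^ k * (y ^ l * sn))), ← zpow_add, ← zpow_add]
  rw [show y ^ k * (R * sk) + y ^ k * (a * r₂) + -(a * y ^ k) * r₂ = R * sk * y ^ k by ring]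
  congr 1
  ring_nf
end

section
/- Let g, θ ∈ G₁ and g̃ ∈ G₂, let y, sn, sk, R₁, R₂ be integers, and let l₁, k₁, l₂, k₂ be natural numbers with l₁ + k₁ = l₂ + k₂. Set δ̃_k = g̃^{y^{k}} and consider the two recomputed security tags T₁ = e(g, g̃)^{R₁·sk·y^{k₁}} · e(θ, g̃)^{sn·y^{l₁+k₁}} and T₂ = e(g, g̃)^{R₂·sk·y^{k₂}} · e(θ, g̃)^{sn·y^{l₂+k₂}}. Then T₁ · T₂^{-1} = e(g^{sk}, δ̃_{k₁}^{R₁} · δ̃_{k₂}^{-R₂}). -/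
/-- Correctness of double-spender identification in the divisible e-cash scheme. -/
theorem divisible_identify_correctness
    {G₁ G₂ GT : Type*} [CommGroup G₁] [CommGroup G₂] [CommGroup GT]
    (e : G₁ → G₂ → GT)
    (e_mul_left : ∀ (x x' : G₁) (y : G₂), e (x * x') y = e x y * e x' y)
    (e_mul_right : ∀ (x : G₁) (y y' : G₂), e x (y * y') = e x y * e x y')
    (g θ : G₁) (gt : G₂)
    (y sn sk R₁ R₂ : ℤ)
    (l₁ k₁ l₂ k₂ : ℕ) (hcoll : l₁ + k₁ = l₂ + k₂)
    (δk₁ δk₂ : G₂) (T₁ T₂ : GT)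
    (hδk₁ : δk₁ = gt ^ (y ^ k₁))
    (hδk₂ : δk₂ = gt ^ (y ^ k₂))
    (hT₁ : T₁ = (e g gt) ^ (R₁ * sk * y ^ k₁) * (e θ gt) ^ (sn * y ^ (l₁ + k₁)))
    (hT₂ : T₂ = (e g gt) ^ (R₂ * sk * y ^ k₂) * (e θ gt) ^ (sn * y ^ (l₂ + k₂))) :
    T₁ * T₂⁻¹ = e (g ^ sk) (δk₁ ^ R₁ * δk₂ ^ (-R₂)) := by
  have hright : ∀ (x : G₁) (b : G₂) (n : ℤ), e x (b ^ n) = (e x b) ^ n := by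
    intro x b n
    exact map_zpow (MonoidHom.mk' (fun z => e x z) (fun a b => e_mul_right x a b)) b n
  have hleft : ∀ (a : G₁) (b : G₂) (n : ℤ), e (a ^ n) b = (e a b) ^ n := by
    intro a b n
    exact map_zpow (MonoidHom.mk' (fun z => e z b) (fun a a' => e_mul_left a a' b)) a n
  subst hδk₁ hδk₂ hT₁ hT₂
  rw [e_mul_right, hleft, hleft, hright, hright, hright, hright, hcoll,
    ← zpow_mul, ← zpow_mul, ← zpow_mul, ← zpow_mul]
  rw [mul_inv, mul_mul_mul_comm, ← zpow_neg, ← zpow_add, ← zpow_neg, ← zpow_add,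
    neg_mul, add_neg_cancel, zpow_zero, mul_one]
  rw [zpow_add]; ring_nf
end
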